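/- arXiv:2404.19118 — 2 statements merged into one kernel-verified Lean document; each statement's English description precedes it below -/
import Mathlib

section
/- Identification of the marginal counterfactual mean under control over the entire trial population (control-arm part of Theorem 2): under assumptions (P-0-all), (I-0-all) and (C-0-all), one has 𝔼[Y⁰] = Σ_{(w,e): 𝒫(W=w,E=e)>0} μ_all(0,w,e) · p(w,e). -/
open MeasureTheory Finset

/-- Conditional expectation given an event: `𝔼[X | B] := 𝔼[X · 1_B] / 𝒫(B)`. -/
noncomputable def condMean {Ω : Type*} [MeasurableSpace Ω] (P : Measure Ω)
    (X : Ω → ℝ) (B : Set Ω) : ℝ :=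
  (∫ ω, B.indicator X ω ∂P) / (P B).toReal

/-!
Split `𝔼[Y⁰]` over the finitely many strata `{W = w, E = e}`. On a null stratum the
contribution vanishes; on a stratum of positive mass it equals `𝔼[Y⁰ | W = w, E = e] · p(w,e)`,
and positivity lets ignorability and then consistency replace `𝔼[Y⁰ | W = w, E = e]` by
`𝔼[Y | A = 0, W = w, E = e]`.
-/

section

variable {Ω : Type*} [MeasurableSpace Ω] {μ : Measure Ω}

theorem integral_eq_sum_integral_indicator_fiber {α : Type*} [Fintype α] [MeasurableSpace α]
    [MeasurableSingletonClass α] {G : Type*} [NormedAddCommGroup G] [NormedSpace ℝ G]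
    {f : Ω → α} (hf : Measurable f) {X : Ω → G} (hX : Integrable X μ) :
    ∫ ω, X ω ∂μ = ∑ a, ∫ ω, (f ⁻¹' {a}).indicator X ω ∂μ := by
  have hfiber : ∀ a, MeasurableSet (f ⁻¹' {a}) := fun a => hf (measurableSet_singleton a)
  calc ∫ ω, X ω ∂μ = ∫ ω in ⋃ a, f ⁻¹' {a}, X ω ∂μ := by
        rw [← Set.preimage_iUnion, Set.iUnion_of_singleton, Set.preimage_univ, setIntegral_univ]
    _ = ∑ a, ∫ ω in f ⁻¹' {a}, X ω ∂μ :=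
        integral_iUnion_fintype hfiber (pairwise_disjoint_fiber f)
          (fun _ => hX.integrableOn)
    _ = ∑ a, ∫ ω, (f ⁻¹' {a}).indicator X ω ∂μ := by
        simp_rw [integral_indicator (hfiber _)]

theorem integral_indicator_eq_condMean_mul [IsFiniteMeasure μ] {B : Set Ω}
    (hB : MeasurableSet B) (X : Ω → ℝ) :
    ∫ ω, B.indicator X ω ∂μ = if 0 < μ B then condMean μ X B * (μ B).toReal else 0 := by
  split_ifs with hpos
  · exact (div_mul_cancel₀ _ (ENNReal.toReal_pos hpos.ne' (measure_ne_top μ B)).ne').symm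
  · have hnull : μ B = 0 := nonpos_iff_eq_zero.mp (not_lt.mp hpos)
    rw [integral_indicator hB, Measure.restrict_eq_zero.mpr hnull, integral_zero_measure]

end

theorem marginal_mean_control_identification_general
    {Ω : Type*} [MeasurableSpace Ω] (P : Measure Ω) [IsProbabilityMeasure P]
    {𝓦 ℰ : Type*} [Fintype 𝓦] [Fintype ℰ]
    [MeasurableSpace 𝓦] [MeasurableSingletonClass 𝓦]
    [MeasurableSpace ℰ] [MeasurableSingletonClass ℰ]
    (W : Ω → 𝓦) (E : Ω → ℰ) {K : ℕ} (A : Ω → Fin (K + 1))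
    (Y Y0 : Ω → ℝ)
    (hW : Measurable W) (hE : Measurable E)
    (hY0 : Integrable Y0 P)
    -- (P-0-all) positivity of the shared control arm among all units
    (hP0all : ∀ (w : 𝓦) (e : ℰ), 0 < P {ω | W ω = w ∧ E ω = e} →
      0 < P {ω | A ω = 0 ∧ W ω = w ∧ E ω = e})
    -- (I-0-all) weak A-ignorability for arm 0 among all units
    (hI0all : ∀ (w : 𝓦) (e : ℰ), 0 < P {ω | A ω = 0 ∧ W ω = w ∧ E ω = e} →
      condMean P Y0 {ω | W ω = w ∧ E ω = e} =
        condMean P Y0 {ω | A ω = 0 ∧ W ω = w ∧ E ω = e})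
    -- (C-0-all) consistency in mean for arm 0 among all units
    (hC0all : ∀ (w : 𝓦) (e : ℰ), 0 < P {ω | A ω = 0 ∧ W ω = w ∧ E ω = e} →
      condMean P Y0 {ω | A ω = 0 ∧ W ω = w ∧ E ω = e} =
        condMean P Y {ω | A ω = 0 ∧ W ω = w ∧ E ω = e})
    :
    ∫ ω, Y0 ω ∂P =
      ∑ w : 𝓦, ∑ e : ℰ,
        if 0 < P {ω | W ω = w ∧ E ω = e} then
          condMean P Y {ω | A ω = 0 ∧ W ω = w ∧ E ω = e} *
            (P {ω | W ω = w ∧ E ω = e}).toReal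
        else 0 := by
  have hstratum : ∀ w e, (fun ω => (W ω, E ω)) ⁻¹' {(w, e)} = {ω | W ω = w ∧ E ω = e} :=
    fun _ _ => Set.ext fun _ => Prod.ext_iff
  have hmeas : ∀ w e, MeasurableSet {ω | W ω = w ∧ E ω = e} := fun w e =>
    hstratum w e ▸ (hW.prodMk hE) (measurableSet_singleton (w, e))
  rw [integral_eq_sum_integral_indicator_fiber (hW.prodMk hE) hY0, Fintype.sum_prod_type]
  refine sum_congr rfl fun w _ => sum_congr rfl fun e _ => ?_
  rw [hstratum, integral_indicator_eq_condMean_mul (hmeas w e)]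
  split_ifs with hpos
  · rw [hI0all w e (hP0all w e hpos), hC0all w e (hP0all w e hpos)]
  · rfl

/-- Identification of the marginal counterfactual mean under control over the entire trial
population (control-arm part of Theorem 2): under (P-0-all), (I-0-all) and (C-0-all),
`𝔼[Y⁰] = Σ_{(w,e) : 𝒫(W=w,E=e)>0} μ_all(0,w,e) · p(w,e)`. -/
theorem marginal_mean_control_identification
    {Ω : Type*} [MeasurableSpace Ω] (P : Measure Ω) [IsProbabilityMeasure P]
    {𝓦 ℰ : Type*} [Fintype 𝓦] [Fintype ℰ] [Nonempty 𝓦] [Nonempty ℰ]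
    [MeasurableSpace 𝓦] [MeasurableSingletonClass 𝓦]
    [MeasurableSpace ℰ] [MeasurableSingletonClass ℰ]
    (W : Ω → 𝓦) (E : Ω → ℰ) (V : Ω → Fin 2) {K : ℕ} (A : Ω → Fin (K + 1))
    (k : Fin (K + 1)) (Y Yk Y0 : Ω → ℝ)
    (hW : Measurable W) (hE : Measurable E) (hV : Measurable V) (hA : Measurable A)
    (hY : Integrable Y P) (hYk : Integrable Yk P) (hY0 : Integrable Y0 P)
    -- (P-0-all) positivity of the shared control arm among all units
    (hP0all : ∀ (w : 𝓦) (e : ℰ), 0 < P {ω | W ω = w ∧ E ω = e} →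
      0 < P {ω | A ω = 0 ∧ W ω = w ∧ E ω = e})
    -- (I-0-all) weak A-ignorability for arm 0 among all units
    (hI0all : ∀ (w : 𝓦) (e : ℰ), 0 < P {ω | A ω = 0 ∧ W ω = w ∧ E ω = e} →
      condMean P Y0 {ω | W ω = w ∧ E ω = e} =
        condMean P Y0 {ω | A ω = 0 ∧ W ω = w ∧ E ω = e})
    -- (C-0-all) consistency in mean for arm 0 among all units
    (hC0all : ∀ (w : 𝓦) (e : ℰ), 0 < P {ω | A ω = 0 ∧ W ω = w ∧ E ω = e} →
      condMean P Y0 {ω | A ω = 0 ∧ W ω = w ∧ E ω = e} =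
        condMean P Y {ω | A ω = 0 ∧ W ω = w ∧ E ω = e})
    :
    ∫ ω, Y0 ω ∂P =
      ∑ w : 𝓦, ∑ e : ℰ,
        if 0 < P {ω | W ω = w ∧ E ω = e} then
          condMean P Y {ω | A ω = 0 ∧ W ω = w ∧ E ω = e} *
            (P {ω | W ω = w ∧ E ω = e}).toReal
        else 0 :=
  marginal_mean_control_identification_general P W E A Y Y0 hW hE hY0 hP0all hI0all hC0all
end

section
/- Population double robustness of the doubly robust functional with respect to the outcome model (robustness property of cATE_DR claimed in Section 5.3): let m : {0,1} × 𝒲 × ℰ → ℝ be an arbitrary function (a possibly misspecified outcome model) and let π be the true propensity score among concurrent units. Then (1/𝒫(V=1)) · 𝔼[ 1{V=1} · ( (2A−1)/(A·π(W,E) + (1−A)·(1−π(W,E))) · (Y − m(A,W,E)) + m(1,W,E) − m(0,W,E) ) ] = Σ_{(w,e): 𝒫(W=w,E=e,V=1)>0} (μ_oc(1,w,e) − μ_oc(0,w,e)) · p(w,e|V=1). -/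
/-!
Split the concurrent units into the strata `{A = a, W = w, E = e, V = 1}`. The augmented
score is affine in `Y`, so its integral over a stratum only sees `Y` through the stratum mean
`μ_oc(a,w,e)`. With `r_a := 𝒫(A = a, W = w, E = e, V = 1)` the true propensity is
`π = r₁ / (r₀ + r₁)`, so the weights `1/π` and `1/(1-π)` rescale both arm masses to the mass
`r₀ + r₁` of `(w,e)`: the weighted residuals contribute `(μ_oc(1) - m(1) - μ_oc(0) + m(0))(r₀ + r₁)`,
and the augmentation `(m(1) - m(0))(r₀ + r₁)` cancels the outcome model.
-/

open MeasureTheory Finset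

/-- `1/p` for `a = 1` and `-1/(1-p)` for `a = 0`. -/
noncomputable def ipwWeight (a : Fin 2) (p : ℝ) : ℝ :=
  (2 * ((a : ℕ) : ℝ) - 1) / (((a : ℕ) : ℝ) * p + (1 - ((a : ℕ) : ℝ)) * (1 - p))

noncomputable def aipwTerm (a : Fin 2) (p y : ℝ) (m : Fin 2 → ℝ) : ℝ :=
  ipwWeight a p * (y - m a) + m 1 - m 0

lemma aipwTerm_eq_affine (a : Fin 2) (p y : ℝ) (m : Fin 2 → ℝ) :
    aipwTerm a p y m = ipwWeight a p * y + (m 1 - m 0 - ipwWeight a p * m a) := by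
  unfold aipwTerm
  ring

lemma sum_aipwTerm_mul_eq (μ m r : Fin 2 → ℝ) (h0 : 0 < r 0) (h1 : 0 < r 1) :
    ∑ a, aipwTerm a (r 1 / ∑ b, r b) (μ a) m * r a = (μ 1 - μ 0) * ∑ a, r a := by
  simp only [Fin.sum_univ_two, aipwTerm, ipwWeight, Fin.val_zero, Fin.val_one,
    Nat.cast_zero, Nat.cast_one]
  field_simp [h0.ne', h1.ne']
  ring

section Integrals

variable {Ω : Type*} [MeasurableSpace Ω] {P : Measure Ω}

lemma integral_eq_sum_setIntegral_fiber {G : Type*} [NormedAddCommGroup G] [NormedSpace ℝ G]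
    {κ : Type*} [Fintype κ] {k : Ω → κ} (hk : ∀ i, MeasurableSet (k ⁻¹' {i}))
    {f : Ω → G} {g : κ → Ω → G} (hg : ∀ i, Integrable (g i) P)
    (hfg : ∀ ω, f ω = g (k ω) ω) :
    ∫ ω, f ω ∂P = ∑ i, ∫ ω in k ⁻¹' {i}, g i ω ∂P := by
  classical
  have hf : f = fun ω => ∑ i, (k ⁻¹' {i}).indicator (g i) ω := by
    funext ω
    rw [hfg, Finset.sum_eq_single_of_mem (k ω) (Finset.mem_univ _)]
    · simp
    · intro i _ hi
      exact Set.indicator_of_notMem (fun h => hi h.symm) _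
  rw [hf, integral_finsetSum _ fun i _ => (hg i).indicator (hk i)]
  exact Finset.sum_congr rfl fun i _ => integral_indicator (hk i)

variable [IsFiniteMeasure P]

lemma setIntegral_eq_condMean_mul {X : Ω → ℝ} {S : Set Ω} (hS : MeasurableSet S) :
    ∫ ω in S, X ω ∂P = condMean P X S * P.real S := by
  by_cases hPS : P S = 0
  · rw [Measure.restrict_eq_zero.mpr hPS, integral_zero_measure, measureReal_def, hPS]
    simp
  · rw [condMean, ← measureReal_def, integral_indicator hS,
      div_mul_cancel₀ _ ((measureReal_eq_zero_iff).not.mpr hPS)]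

lemma setIntegral_aipwTerm {Y : Ω → ℝ} (hY : Integrable Y P) {S : Set Ω} (hS : MeasurableSet S)
    (a : Fin 2) (p : ℝ) (m : Fin 2 → ℝ) :
    ∫ ω in S, aipwTerm a p (Y ω) m ∂P = aipwTerm a p (condMean P Y S) m * P.real S := by
  simp only [aipwTerm_eq_affine]
  rw [integral_add (hY.integrableOn.const_mul _) (integrable_const _), integral_const_mul,
    setIntegral_const, setIntegral_eq_condMean_mul hS, smul_eq_mul]
  ring

lemma Integrable.aipwTerm {Y : Ω → ℝ} (hY : Integrable Y P) (a : Fin 2) (p : ℝ)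
    (m : Fin 2 → ℝ) : Integrable (fun ω => aipwTerm a p (Y ω) m) P := by
  simp only [aipwTerm_eq_affine]
  exact (hY.const_mul _).add (integrable_const _)

lemma measureReal_setOf_eq_sum_fin_two {A : Ω → Fin 2} (hA : Measurable A) (p : Ω → Prop) :
    P.real {ω | p ω} = ∑ a, P.real {ω | A ω = a ∧ p ω} := by
  rw [Fin.sum_univ_two, add_comm,
    ← measureReal_inter_add_sdiff (s := {ω | p ω}) (hA (measurableSet_singleton 1))]
  congr 2 <;> ext ω
  · simp [and_comm]
  · have hne : ∀ a : Fin 2, ¬a = 1 ↔ a = 0 := by decide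
    simp only [Set.mem_sdiff, Set.mem_ofPred_eq, Set.mem_preimage, Set.mem_singleton_iff]
    rw [and_comm, hne]

lemma sum_aipwTerm_mul_measureReal {A : Ω → Fin 2} (hA : Measurable A) (p : Ω → Prop)
    (hpos : ∀ a, 0 < P {ω | p ω} → 0 < P {ω | A ω = a ∧ p ω}) (μ m : Fin 2 → ℝ) {π : ℝ}
    (hπ : π = P.real {ω | A ω = 1 ∧ p ω} / P.real {ω | p ω}) :
    ∑ a, aipwTerm a π (μ a) m * P.real {ω | A ω = a ∧ p ω} = (μ 1 - μ 0) * P.real {ω | p ω} := by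
  rw [measureReal_setOf_eq_sum_fin_two hA p] at hπ ⊢
  rcases (zero_le : 0 ≤ P {ω | p ω}).lt_or_eq with hp | hp
  · subst hπ
    exact sum_aipwTerm_mul_eq μ m (fun a => P.real {ω | A ω = a ∧ p ω})
      (ENNReal.toReal_pos (hpos 0 hp).ne' (measure_ne_top _ _))
      (ENNReal.toReal_pos (hpos 1 hp).ne' (measure_ne_top _ _))
  · have hnull : ∀ a, P.real {ω | A ω = a ∧ p ω} = 0 := fun a =>
      (measureReal_eq_zero_iff).mpr (measure_mono_null (fun ω hω => hω.2) hp.symm)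
    simp [hnull]

lemma setIntegral_aipwTerm_eq_sum_strata {𝓦 ℰ : Type*} [Fintype 𝓦] [Fintype ℰ]
    [MeasurableSpace 𝓦] [MeasurableSingletonClass 𝓦] [MeasurableSpace ℰ] [MeasurableSingletonClass ℰ]
    {W : Ω → 𝓦} {E : Ω → ℰ} {A : Ω → Fin 2} {Y : Ω → ℝ} {T : Set Ω}
    (hW : Measurable W) (hE : Measurable E) (hA : Measurable A) (hY : Integrable Y P)
    (hT : MeasurableSet T) (π : 𝓦 → ℰ → ℝ) (m : Fin 2 → 𝓦 → ℰ → ℝ) :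
    ∫ ω in T, aipwTerm (A ω) (π (W ω) (E ω)) (Y ω) (m · (W ω) (E ω)) ∂P =
      ∑ w, ∑ e, ∑ a, aipwTerm a (π w e)
        (condMean P Y {ω | A ω = a ∧ W ω = w ∧ E ω = e ∧ ω ∈ T}) (m · w e) *
          P.real {ω | A ω = a ∧ W ω = w ∧ E ω = e ∧ ω ∈ T} := by
  have hkey : Measurable fun ω => (W ω, E ω, A ω) := hW.prodMk (hE.prodMk hA)
  have hstratum : ∀ w e a, (fun ω => (W ω, E ω, A ω)) ⁻¹' {(w, e, a)} ∩ T =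
      {ω | A ω = a ∧ W ω = w ∧ E ω = e ∧ ω ∈ T} := by
    intro w e a
    ext ω
    simp only [Set.mem_inter_iff, Set.mem_preimage, Set.mem_singleton_iff, Prod.mk.injEq,
      Set.mem_ofPred_eq]
    tauto
  have hstratum_meas : ∀ w e a, MeasurableSet {ω | A ω = a ∧ W ω = w ∧ E ω = e ∧ ω ∈ T} :=
    fun w e a => hstratum w e a ▸ (hkey (measurableSet_singleton _)).inter hT
  rw [integral_eq_sum_setIntegral_fiber (fun i => hkey (measurableSet_singleton i))
    (g := fun i ω => aipwTerm i.2.2 (π i.1 i.2.1) (Y ω) (m · i.1 i.2.1))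
    (fun i => Integrable.aipwTerm hY.restrict _ _ _) (fun ω => rfl)]
  simp only [Fintype.sum_prod_type, Measure.restrict_restrict (hkey (measurableSet_singleton _)),
    hstratum, setIntegral_aipwTerm hY (hstratum_meas _ _ _)]

end Integrals

theorem doubly_robust_wrt_outcome_model_general
    {Ω : Type*} [MeasurableSpace Ω] (P : Measure Ω) [IsProbabilityMeasure P]
    {𝓦 ℰ : Type*} [Fintype 𝓦] [Fintype ℰ]
    [MeasurableSpace 𝓦] [MeasurableSingletonClass 𝓦]
    [MeasurableSpace ℰ] [MeasurableSingletonClass ℰ]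
    (W : Ω → 𝓦) (E : Ω → ℰ) (V : Ω → Fin 2) (A : Ω → Fin 2) (Y : Ω → ℝ)
    (hW : Measurable W) (hE : Measurable E) (hV : Measurable V) (hA : Measurable A)
    (hY : Integrable Y P)
    -- positivity of both arms among concurrent units
    (hpos1 : ∀ (w : 𝓦) (e : ℰ), 0 < P {ω | W ω = w ∧ E ω = e ∧ V ω = 1} →
      0 < P {ω | A ω = 1 ∧ W ω = w ∧ E ω = e ∧ V ω = 1})
    (hpos0 : ∀ (w : 𝓦) (e : ℰ), 0 < P {ω | W ω = w ∧ E ω = e ∧ V ω = 1} →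
      0 < P {ω | A ω = 0 ∧ W ω = w ∧ E ω = e ∧ V ω = 1})
    -- the true outcome regression among concurrent units
    (μoc : Fin 2 → 𝓦 → ℰ → ℝ)
    (hμoc : ∀ (a : Fin 2) (w : 𝓦) (e : ℰ), μoc a w e =
      condMean P Y {ω | A ω = a ∧ W ω = w ∧ E ω = e ∧ V ω = 1})
    -- the true propensity score among concurrent units
    (π : 𝓦 → ℰ → ℝ)
    (hπ : ∀ (w : 𝓦) (e : ℰ), π w e =
      (P {ω | A ω = 1 ∧ W ω = w ∧ E ω = e ∧ V ω = 1}).toReal /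
        (P {ω | W ω = w ∧ E ω = e ∧ V ω = 1}).toReal)
    -- an arbitrary, possibly misspecified, outcome model
    (m : Fin 2 → 𝓦 → ℰ → ℝ) :
    (1 / (P {ω | V ω = 1}).toReal) *
      ∫ ω, (if V ω = 1 then
          (2 * ((A ω : ℕ) : ℝ) - 1) /
              (((A ω : ℕ) : ℝ) * π (W ω) (E ω) +
                (1 - ((A ω : ℕ) : ℝ)) * (1 - π (W ω) (E ω))) *
              (Y ω - m (A ω) (W ω) (E ω)) +
            m 1 (W ω) (E ω) - m 0 (W ω) (E ω)
        else 0) ∂P =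
      ∑ w : 𝓦, ∑ e : ℰ,
        if 0 < P {ω | W ω = w ∧ E ω = e ∧ V ω = 1} then
          (μoc 1 w e - μoc 0 w e) *
            ((P {ω | W ω = w ∧ E ω = e ∧ V ω = 1}).toReal / (P {ω | V ω = 1}).toReal)
        else 0 := by
  have hT : MeasurableSet {ω | V ω = 1} := hV (measurableSet_singleton 1)
  calc _ = 1 / P.real {ω | V ω = 1} * ∫ ω in {ω | V ω = 1},
        aipwTerm (A ω) (π (W ω) (E ω)) (Y ω) (m · (W ω) (E ω)) ∂P := by
        rw [← integral_indicator hT]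
        congr 2
        funext ω
        by_cases hω : V ω = 1 <;> simp [hω, aipwTerm, ipwWeight]
    _ = 1 / P.real {ω | V ω = 1} * ∑ w, ∑ e, ∑ a, aipwTerm a (π w e) (μoc a w e) (m · w e) *
          P.real {ω | A ω = a ∧ W ω = w ∧ E ω = e ∧ V ω = 1} := by
        rw [setIntegral_aipwTerm_eq_sum_strata hW hE hA hY hT]
        simp only [Set.mem_ofPred_eq, ← hμoc]
    _ = 1 / P.real {ω | V ω = 1} * ∑ w, ∑ e,
          (μoc 1 w e - μoc 0 w e) * P.real {ω | W ω = w ∧ E ω = e ∧ V ω = 1} := by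
        congr 1
        refine Finset.sum_congr rfl fun w _ => Finset.sum_congr rfl fun e _ => ?_
        exact sum_aipwTerm_mul_measureReal hA (fun ω => W ω = w ∧ E ω = e ∧ V ω = 1)
          (Fin.forall_fin_two.mpr ⟨hpos0 w e, hpos1 w e⟩) _ _ (hπ w e)
    _ = _ := by
        simp only [Finset.mul_sum]
        refine Finset.sum_congr rfl fun w _ => Finset.sum_congr rfl fun e _ => ?_
        split_ifs with hwe
        · simp only [measureReal_def]
          ring
        · rw [(measureReal_eq_zero_iff).mpr (nonpos_iff_eq_zero.mp (not_lt.mp hwe)), mul_zero,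
            mul_zero]

/-- Population double robustness of the doubly robust functional with respect to the
outcome model (Section 5.3): for an arbitrary (possibly misspecified) outcome model `m`
and the true propensity score `π` among concurrent units,
`(1/𝒫(V=1)) · 𝔼[1{V=1} · ((2A−1)/(A·π(W,E)+(1−A)·(1−π(W,E))) · (Y − m(A,W,E))
  + m(1,W,E) − m(0,W,E))] = Σ_{(w,e) : 𝒫(W=w,E=e,V=1)>0} (μ_oc(1,w,e) − μ_oc(0,w,e)) · p(w,e|V=1)`. -/
theorem doubly_robust_wrt_outcome_model
    {Ω : Type*} [MeasurableSpace Ω] (P : Measure Ω) [IsProbabilityMeasure P]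
    {𝓦 ℰ : Type*} [Fintype 𝓦] [Fintype ℰ] [Nonempty 𝓦] [Nonempty ℰ]
    [MeasurableSpace 𝓦] [MeasurableSingletonClass 𝓦]
    [MeasurableSpace ℰ] [MeasurableSingletonClass ℰ]
    (W : Ω → 𝓦) (E : Ω → ℰ) (V : Ω → Fin 2) (A : Ω → Fin 2) (Y : Ω → ℝ)
    (hW : Measurable W) (hE : Measurable E) (hV : Measurable V) (hA : Measurable A)
    (hY : Integrable Y P)
    (hV1 : 0 < P {ω | V ω = 1})
    -- positivity of both arms among concurrent units
    (hpos1 : ∀ (w : 𝓦) (e : ℰ), 0 < P {ω | W ω = w ∧ E ω = e ∧ V ω = 1} →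
      0 < P {ω | A ω = 1 ∧ W ω = w ∧ E ω = e ∧ V ω = 1})
    (hpos0 : ∀ (w : 𝓦) (e : ℰ), 0 < P {ω | W ω = w ∧ E ω = e ∧ V ω = 1} →
      0 < P {ω | A ω = 0 ∧ W ω = w ∧ E ω = e ∧ V ω = 1})
    -- the true outcome regression among concurrent units
    (μoc : Fin 2 → 𝓦 → ℰ → ℝ)
    (hμoc : ∀ (a : Fin 2) (w : 𝓦) (e : ℰ), μoc a w e =
      condMean P Y {ω | A ω = a ∧ W ω = w ∧ E ω = e ∧ V ω = 1})
    -- the true propensity score among concurrent units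
    (π : 𝓦 → ℰ → ℝ)
    (hπ : ∀ (w : 𝓦) (e : ℰ), π w e =
      (P {ω | A ω = 1 ∧ W ω = w ∧ E ω = e ∧ V ω = 1}).toReal /
        (P {ω | W ω = w ∧ E ω = e ∧ V ω = 1}).toReal)
    -- an arbitrary, possibly misspecified, outcome model
    (m : Fin 2 → 𝓦 → ℰ → ℝ) :
    (1 / (P {ω | V ω = 1}).toReal) *
      ∫ ω, (if V ω = 1 then
          (2 * ((A ω : ℕ) : ℝ) - 1) /
              (((A ω : ℕ) : ℝ) * π (W ω) (E ω) +
                (1 - ((A ω : ℕ) : ℝ)) * (1 - π (W ω) (E ω))) *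
              (Y ω - m (A ω) (W ω) (E ω)) +
            m 1 (W ω) (E ω) - m 0 (W ω) (E ω)
        else 0) ∂P =
      ∑ w : 𝓦, ∑ e : ℰ,
        if 0 < P {ω | W ω = w ∧ E ω = e ∧ V ω = 1} then
          (μoc 1 w e - μoc 0 w e) *
            ((P {ω | W ω = w ∧ E ω = e ∧ V ω = 1}).toReal / (P {ω | V ω = 1}).toReal)
        else 0 :=
  doubly_robust_wrt_outcome_model_general P W E V A Y hW hE hV hA hY hpos1 hpos0 μoc hμoc π hπ m
end
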